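/- Dragomir's second Pečarić-type bound: Let x, y_1, ..., y_n be vectors in an inner product space (H, ⟨·,·⟩) over the real or complex field 𝕂, let c_1, ..., c_n ∈ 𝕂, and let p > 1, q > 1 with 1/p + 1/q = 1. Then | ∑_{k=1}^n c_k ⟨x, y_k⟩ |² ≤ ‖x‖² · ( ∑_{k=1}^n |c_k| ) · ( ∑_{k=1}^n |c_k|^p )^{1/p} · max_{1≤i≤n} { ( ∑_{j=1}^n |⟨y_i, y_j⟩|^q )^{1/q} }. -/

import Mathlib

/-!
Put `z = ∑ k, c k • y k`, so that the left-hand side is `‖⟪x, z⟫‖²`. Cauchy–Schwarz bounds it by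
`‖x‖² ‖z‖²`, and expanding `‖z‖² = ⟪z, z⟫` with the triangle inequality gives
`‖z‖² ≤ ∑ i, ‖c i‖ ∑ j, ‖c j‖ ‖⟪y i, y j⟫‖`. Hölder's inequality bounds the inner sum by
`(∑ j, ‖c j‖ ^ p) ^ (1/p)` times the `q`-norm of the `i`-th row of the Gram matrix, and the
outer sum is at most `∑ i, ‖c i‖` times the largest of these row norms.
-/

open Finset

section InnerProductSpace

variable {𝕜 H ι : Type*} [RCLike 𝕜] [NormedAddCommGroup H] [InnerProductSpace 𝕜 H]

theorem sum_mul_inner_eq_inner_sum_smul (s : Finset ι) (x : H) (c : ι → 𝕜) (y : ι → H) :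
    ∑ k ∈ s, c k * (inner 𝕜 x (y k) : 𝕜) = inner 𝕜 x (∑ k ∈ s, c k • y k) := by
  simp only [inner_sum, inner_smul_right]

theorem norm_sum_smul_sq_le (s : Finset ι) (c : ι → 𝕜) (y : ι → H) :
    ‖∑ i ∈ s, c i • y i‖ ^ 2 ≤
      ∑ i ∈ s, ‖c i‖ * ∑ j ∈ s, ‖c j‖ * ‖(inner 𝕜 (y i) (y j) : 𝕜)‖ := by
  have hexpand : (inner 𝕜 (∑ i ∈ s, c i • y i) (∑ j ∈ s, c j • y j) : 𝕜) =
      ∑ i ∈ s, ∑ j ∈ s, c j * ((starRingEnd 𝕜) (c i) * inner 𝕜 (y i) (y j)) := by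
    rw [sum_inner]
    simp only [inner_smul_left, inner_sum, inner_smul_right]
  calc ‖∑ i ∈ s, c i • y i‖ ^ 2
      = ‖(inner 𝕜 (∑ i ∈ s, c i • y i) (∑ j ∈ s, c j • y j) : 𝕜)‖ := by
        rw [inner_self_eq_norm_sq_to_K, norm_pow, RCLike.norm_ofReal, abs_norm]
    _ ≤ ∑ i ∈ s, ∑ j ∈ s, ‖c j * ((starRingEnd 𝕜) (c i) * inner 𝕜 (y i) (y j))‖ := by
        rw [hexpand]
        exact norm_sum_le_of_le _ fun i _ => norm_sum_le _ _
    _ = ∑ i ∈ s, ‖c i‖ * ∑ j ∈ s, ‖c j‖ * ‖(inner 𝕜 (y i) (y j) : 𝕜)‖ := by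
        simp only [norm_mul, RCLike.norm_conj, mul_sum, mul_left_comm]

end InnerProductSpace

theorem Finset.sum_mul_le_sum_mul_sup' {ι : Type*} {s : Finset ι} (hs : s.Nonempty)
    (a b : ι → ℝ) (ha : ∀ i ∈ s, 0 ≤ a i) :
    ∑ i ∈ s, a i * b i ≤ (∑ i ∈ s, a i) * s.sup' hs b := by
  rw [sum_mul]
  exact sum_le_sum fun i hi => mul_le_mul_of_nonneg_left (le_sup' b hi) (ha i hi)

theorem dragomir_pecaric_type_second_general {𝕜 H : Type*} [RCLike 𝕜] [NormedAddCommGroup H]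
    [InnerProductSpace 𝕜 H] {n : ℕ} (hn : 0 < n) (x : H) (y : Fin n → H) (c : Fin n → 𝕜)
    {p q : ℝ} (hp : 1 < p) (hpq : 1 / p + 1 / q = 1) :
    ‖∑ k, c k * (inner 𝕜 x (y k) : 𝕜)‖ ^ 2 ≤
      ‖x‖ ^ 2 * (∑ k, ‖c k‖) * (∑ k, ‖c k‖ ^ p) ^ (1 / p) *
        Finset.univ.sup' (Finset.univ_nonempty_iff.mpr (Fin.pos_iff_nonempty.mp hn))
          (fun i => (∑ j, ‖(inner 𝕜 (y i) (y j) : 𝕜)‖ ^ q) ^ (1 / q)) := by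
  have hpq' : p.HolderConjugate q :=
    Real.holderConjugate_iff.mpr ⟨hp, by simpa only [one_div] using hpq⟩
  have hne : (univ : Finset (Fin n)).Nonempty :=
    univ_nonempty_iff.mpr (Fin.pos_iff_nonempty.mp hn)
  set P := (∑ k, ‖c k‖ ^ p) ^ (1 / p)
  set R := fun i => (∑ j, ‖(inner 𝕜 (y i) (y j) : 𝕜)‖ ^ q) ^ (1 / q)
  have hholder : ∀ i, ∑ j, ‖c j‖ * ‖(inner 𝕜 (y i) (y j) : 𝕜)‖ ≤ P * R i := fun i =>
    Real.inner_le_Lp_mul_Lq_of_nonneg univ hpq' (fun _ _ => norm_nonneg _)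
      (fun _ _ => norm_nonneg _)
  calc ‖∑ k, c k * (inner 𝕜 x (y k) : 𝕜)‖ ^ 2
      ≤ ‖x‖ ^ 2 * ‖∑ k, c k • y k‖ ^ 2 := by
        rw [sum_mul_inner_eq_inner_sum_smul, ← mul_pow]
        exact pow_le_pow_left₀ (norm_nonneg _) (norm_inner_le_norm _ _) 2
    _ ≤ ‖x‖ ^ 2 * ∑ i, ‖c i‖ * (P * R i) := by
        gcongr
        refine (norm_sum_smul_sq_le univ c y).trans (sum_le_sum fun i _ => ?_)
        exact mul_le_mul_of_nonneg_left (hholder i) (norm_nonneg _)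
    _ = ‖x‖ ^ 2 * P * ∑ i, ‖c i‖ * R i := by
        simp only [mul_left_comm _ P, ← mul_sum, mul_assoc]
    _ ≤ ‖x‖ ^ 2 * P * ((∑ i, ‖c i‖) * univ.sup' hne R) := by
        gcongr
        exact sum_mul_le_sum_mul_sup' hne _ _ fun _ _ => norm_nonneg _
    _ = _ := by ring

/-- Dragomir's second Pečarić-type bound. -/
theorem dragomir_pecaric_type_second {𝕜 H : Type*} [RCLike 𝕜] [NormedAddCommGroup H]
    [InnerProductSpace 𝕜 H] {n : ℕ} (hn : 0 < n) (x : H) (y : Fin n → H) (c : Fin n → 𝕜)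
    {p q : ℝ} (hp : 1 < p) (hq : 1 < q) (hpq : 1 / p + 1 / q = 1) :
    ‖∑ k, c k * (inner 𝕜 x (y k) : 𝕜)‖ ^ 2 ≤
      ‖x‖ ^ 2 * (∑ k, ‖c k‖) * (∑ k, ‖c k‖ ^ p) ^ (1 / p) *
        Finset.univ.sup' (Finset.univ_nonempty_iff.mpr (Fin.pos_iff_nonempty.mp hn))
          (fun i => (∑ j, ‖(inner 𝕜 (y i) (y j) : 𝕜)‖ ^ q) ^ (1 / q)) :=
  dragomir_pecaric_type_second_general hn x y c hp hpq
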